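/- arXiv:2207.07405 — 2 statements merged into one kernel-verified Lean document; each statement's English description precedes it below -/
import Mathlib

section
/- Let 0 < γ ≤ 1, β ≥ γ, β > 0, and let H : [0,1]×[0,1] → ℝ be continuous with ‖H‖_∞ = sup |H|. Then the cordial Volterra integral operator (Ky)(t) = ∫₀ᵗ t^{-β}(t-s)^{γ-1} s^{β-γ} H(t,s) y(s) ds is a bounded linear operator on C[0,1] with operator norm at most ‖H‖_∞ · B(γ, β-γ+1), where B is the Beta function. -/
open MeasureTheory Real

noncomputable def Beta (a b : ℝ) : ℝ := ∫ x in (0:ℝ)..1, x ^ (a - 1) * (1 - x) ^ (b - 1)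

/-!
Bound `|H(t,s) y(s)|` by `‖H‖_∞ ‖y‖_∞` and integrate the remaining nonnegative kernel
`t^{-β} (t-s)^{γ-1} s^{β-γ}`. The substitution `s = t u` shows that this kernel integrates
to `B(γ, β-γ+1)` for every `t > 0`: the powers of `t` cancel exactly, which is what makes the
operator cordial.
-/

theorem Beta_eq_integral_one_sub_rpow_mul_rpow (a b : ℝ) :
    Beta a b = ∫ u in (0:ℝ)..1, (1 - u) ^ (a - 1) * u ^ (b - 1) := by
  have h := intervalIntegral.integral_comp_sub_left (a := 0) (b := 1)
    (fun x : ℝ => x ^ (a - 1) * (1 - x) ^ (b - 1)) 1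
  simp only [sub_sub_cancel, sub_self, sub_zero] at h
  rw [Beta, ← h]

theorem integral_sub_rpow_mul_rpow {t : ℝ} (ht : 0 < t) (a b : ℝ) :
    ∫ s in (0:ℝ)..t, (t - s) ^ (a - 1) * s ^ (b - 1) = t ^ (a + b - 1) * Beta a b := by
  have hscale : ∀ u ∈ Set.uIcc (0:ℝ) 1, (t - t * u) ^ (a - 1) * (t * u) ^ (b - 1)
      = t ^ (a + b - 2) * ((1 - u) ^ (a - 1) * u ^ (b - 1)) := by
    intro u hu
    rw [Set.uIcc_of_le zero_le_one] at hu
    rw [← mul_one_sub, mul_rpow ht.le (sub_nonneg.2 hu.2), mul_rpow ht.le hu.1,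
      show a + b - 2 = (a - 1) + (b - 1) by ring, rpow_add ht]
    ring
  have hsubst := intervalIntegral.smul_integral_comp_mul_left (a := 0) (b := 1)
    (fun s => (t - s) ^ (a - 1) * s ^ (b - 1)) t
  simp only [mul_zero, mul_one] at hsubst
  rw [← hsubst, intervalIntegral.integral_congr hscale, intervalIntegral.integral_const_mul,
    ← Beta_eq_integral_one_sub_rpow_mul_rpow, smul_eq_mul, ← mul_assoc,
    show a + b - 1 = 1 + (a + b - 2) by ring, rpow_add ht, rpow_one]

theorem intervalIntegrable_sub_rpow_mul_rpow (t : ℝ) {a c : ℝ} (ha : 0 < a) (hc : 0 ≤ c) :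
    IntervalIntegrable (fun s => (t - s) ^ (a - 1) * s ^ c) volume 0 t := by
  have hsing : IntervalIntegrable (fun s => (t - s) ^ (a - 1)) volume 0 t := by
    simpa only [sub_self, sub_zero] using
      ((intervalIntegral.intervalIntegrable_rpow' (a := 0) (b := t) (r := a - 1)
        (by linarith)).comp_sub_left t).symm
  exact hsing.mul_continuousOn fun s _ =>
    (continuousAt_rpow_const s c (Or.inr hc)).continuousWithinAt

theorem abs_integral_mul_le_mul_integral {w f : ℝ → ℝ} {a b C : ℝ} (hab : a ≤ b)
    (hw : ∀ s ∈ Set.Ioc a b, 0 ≤ w s) (hwi : IntervalIntegrable w volume a b)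
    (hf : ∀ s ∈ Set.Ioc a b, |f s| ≤ C) :
    |∫ s in a..b, w s * f s| ≤ C * ∫ s in a..b, w s := by
  rw [← intervalIntegral.integral_const_mul, ← norm_eq_abs]
  refine intervalIntegral.norm_integral_le_of_norm_le hab (ae_of_all _ fun s hs => ?_)
    (hwi.const_mul C)
  rw [norm_mul, norm_eq_abs, abs_of_nonneg (hw s hs), mul_comm]
  exact mul_le_mul_of_nonneg_right (hf s hs) (hw s hs)

theorem le_ciSup_of_continuous {X : Type*} [TopologicalSpace X] [CompactSpace X] {f : X → ℝ}
    (hf : Continuous f) (x : X) : f x ≤ ⨆ x, f x :=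
  le_ciSup (isCompact_range hf).bddAbove x

theorem cordial_operator_bounded_general (γ β : ℝ) (hγ0 : 0 < γ) (hβγ : γ ≤ β)
    (H : ℝ → ℝ → ℝ)
    (hH : ContinuousOn (fun p : ℝ × ℝ => H p.1 p.2) (Set.Icc 0 1 ×ˢ Set.Icc 0 1))
    (y : ℝ → ℝ) (hy : ContinuousOn y (Set.Icc 0 1)) (t : ℝ) (ht : t ∈ Set.Ioc (0:ℝ) 1) :
    |∫ s in (0:ℝ)..t, t ^ (-β) * (t - s) ^ (γ - 1) * s ^ (β - γ) * H t s * y s|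
      ≤ (⨆ p : Set.Icc (0:ℝ) 1 × Set.Icc (0:ℝ) 1, |H p.1 p.2|) *
        (⨆ s : Set.Icc (0:ℝ) 1, |y s|) * Beta γ (β - γ + 1) := by
  obtain ⟨ht0, ht1⟩ := ht
  have hHc : Continuous fun p : Set.Icc (0:ℝ) 1 × Set.Icc (0:ℝ) 1 => |H p.1 p.2| :=
    (hH.comp_continuous (f := fun p : Set.Icc (0:ℝ) 1 × Set.Icc (0:ℝ) 1 =>
      ((p.1 : ℝ), (p.2 : ℝ)))
      (by fun_prop) fun p => ⟨p.1.2, p.2.2⟩).abs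
  have hHy : ∀ s ∈ Set.Ioc 0 t, |H t s * y s| ≤
      (⨆ p : Set.Icc (0:ℝ) 1 × Set.Icc (0:ℝ) 1, |H p.1 p.2|) *
        ⨆ s : Set.Icc (0:ℝ) 1, |y s| := by
    intro s ⟨hs0, hst⟩
    have hHts := le_ciSup_of_continuous hHc (⟨t, ht0.le, ht1⟩, ⟨s, hs0.le, hst.trans ht1⟩)
    have hys := le_ciSup_of_continuous hy.domRestrict.abs ⟨s, hs0.le, hst.trans ht1⟩
    rw [abs_mul]
    exact mul_le_mul hHts hys (abs_nonneg _) ((abs_nonneg _).trans hHts)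
  have hkernel := integral_sub_rpow_mul_rpow ht0 γ (β - γ + 1)
  rw [add_sub_cancel_right, show γ + (β - γ + 1) - 1 = β by ring] at hkernel
  calc _ = |∫ s in (0:ℝ)..t,
          t ^ (-β) * ((t - s) ^ (γ - 1) * s ^ (β - γ)) * (H t s * y s)| := by
        simp only [mul_assoc]
    _ ≤ _ * ∫ s in (0:ℝ)..t, t ^ (-β) * ((t - s) ^ (γ - 1) * s ^ (β - γ)) :=
        abs_integral_mul_le_mul_integral ht0.le (fun s hs => mul_nonneg (rpow_nonneg ht0.le _)
          (mul_nonneg (rpow_nonneg (sub_nonneg.2 hs.2) _) (rpow_nonneg hs.1.le _)))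
          ((intervalIntegrable_sub_rpow_mul_rpow t hγ0 (sub_nonneg.2 hβγ)).const_mul _) hHy
    _ = _ := by
        rw [intervalIntegral.integral_const_mul, hkernel, ← mul_assoc (t ^ (-β)),
          ← rpow_add ht0, neg_add_cancel, rpow_zero, one_mul, mul_assoc]

/-- the cordial Volterra integral operator with continuous kernel `H` is bounded on
`C[0,1]`: for every continuous `y` and `t ∈ (0,1]`, `|Ky(t)| ≤ ‖H‖_∞ ‖y‖_∞ B(γ, β-γ+1)`,
so its operator norm is at most `‖H‖_∞ · B(γ, β-γ+1)`. -/
theorem cordial_operator_bounded (γ β : ℝ) (hγ0 : 0 < γ) (hγ1 : γ ≤ 1) (hβγ : γ ≤ β)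
    (hβ : 0 < β) (H : ℝ → ℝ → ℝ)
    (hH : ContinuousOn (fun p : ℝ × ℝ => H p.1 p.2) (Set.Icc 0 1 ×ˢ Set.Icc 0 1))
    (y : ℝ → ℝ) (hy : ContinuousOn y (Set.Icc 0 1)) (t : ℝ) (ht : t ∈ Set.Ioc (0:ℝ) 1) :
    |∫ s in (0:ℝ)..t, t ^ (-β) * (t - s) ^ (γ - 1) * s ^ (β - γ) * H t s * y s|
      ≤ (⨆ p : Set.Icc (0:ℝ) 1 × Set.Icc (0:ℝ) 1, |H p.1 p.2|) *
        (⨆ s : Set.Icc (0:ℝ) 1, |y s|) * Beta γ (β - γ + 1) :=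
  cordial_operator_bounded_general γ β hγ0 hβγ H hH y hy t ht
end

section
/- Let 0 < γ ≤ 1, β ≥ γ, and h₀ ∈ ℝ with |h₀| · B(γ, β−γ+1) < 1. Then for every continuous g on [0,1], the equation y(t) = g(t) + h₀ ∫₀ᵗ t^{-β}(t−s)^{γ−1} s^{β−γ} y(s) ds has at most one continuous solution y on [0,1]. -/
open MeasureTheory Real

lemma kernel_integrable (γ β t : ℝ) (hγ0 : 0 < γ) (hβγ : γ ≤ β) :
    IntervalIntegrable (fun s => (t - s) ^ (γ - 1) * s ^ (β - γ)) volume 0 t := by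
  have h1 : IntervalIntegrable (fun s : ℝ => (t - s) ^ (γ - 1)) volume 0 t := by
    have h1 := ((intervalIntegral.intervalIntegrable_rpow' (a := 0) (b := t)
      (by linarith : (-1:ℝ) < γ - 1)).comp_sub_left t).symm
    simpa using h1
  exact h1.mul_continuousOn (fun x _ =>
    (Real.continuousAt_rpow_const x (β - γ) (Or.inr (by linarith))).continuousWithinAt)

lemma beta_symm (γ β : ℝ) :
    Beta γ (β - γ + 1) = ∫ u in (0:ℝ)..1, (1 - u) ^ (γ - 1) * u ^ (β - γ) := by
  have h := intervalIntegral.integral_comp_sub_left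
    (fun x => x ^ (γ - 1) * (1 - x) ^ (β - γ)) 1 (a := 0) (b := 1)
  simp only [sub_sub_cancel, sub_self, sub_zero] at h
  rw [Beta, show β - γ + 1 - 1 = β - γ by ring, ← h]

lemma kernel_integral (γ β t : ℝ) (hγ0 : 0 < γ) (hβγ : γ ≤ β) (ht : 0 < t) :
    (∫ s in (0:ℝ)..t, (t - s) ^ (γ - 1) * s ^ (β - γ)) =
      t ^ β * Beta γ (β - γ + 1) := by
  have h := intervalIntegral.integral_comp_mul_right
    (fun s => (t - s) ^ (γ - 1) * s ^ (β - γ)) (a := 0) (b := 1) ht.ne'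
  simp only [zero_mul, one_mul, smul_eq_mul] at h
  have h2 : (∫ u in (0:ℝ)..1, (t - u * t) ^ (γ - 1) * (u * t) ^ (β - γ))
      = t ^ (β - 1) * ∫ u in (0:ℝ)..1, (1 - u) ^ (γ - 1) * u ^ (β - γ) := by
    rw [← intervalIntegral.integral_const_mul]
    apply intervalIntegral.integral_congr
    intro u hu
    show (t - u * t) ^ (γ - 1) * (u * t) ^ (β - γ)
        = t ^ (β - 1) * ((1 - u) ^ (γ - 1) * u ^ (β - γ))
    rw [Set.uIcc_of_le (by norm_num)] at hu
    obtain ⟨hu0, hu1⟩ := hu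
    have h1u : (0:ℝ) ≤ 1 - u := by linarith
    have e1 : t - u * t = t * (1 - u) := by ring
    have e2 : u * t = t * u := by ring
    rw [e1, e2, Real.mul_rpow ht.le h1u, Real.mul_rpow ht.le hu0]
    rw [show t ^ (γ - 1) * (1 - u) ^ (γ - 1) * (t ^ (β - γ) * u ^ (β - γ))
        = (t ^ (γ - 1) * t ^ (β - γ)) * ((1 - u) ^ (γ - 1) * u ^ (β - γ)) by ring,
      ← Real.rpow_add ht, show γ - 1 + (β - γ) = β - 1 by ring]
  rw [h2] at h
  have hI : (∫ s in (0:ℝ)..t, (t - s) ^ (γ - 1) * s ^ (β - γ))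
      = t * (t ^ (β - 1) * ∫ u in (0:ℝ)..1, (1 - u) ^ (γ - 1) * u ^ (β - γ)) := by
    rw [h, ← mul_assoc, mul_inv_cancel₀ ht.ne', one_mul]
  rw [hI, beta_symm, ← mul_assoc]
  congr 1
  nth_rewrite 1 [← Real.rpow_one t]
  rw [← Real.rpow_add ht]
  norm_num

/-- if `|h₀| B(γ, β−γ+1) < 1` then the cordial equation
`y(t) = g(t) + h₀ ∫₀ᵗ t^(-β)(t−s)^(γ−1)s^(β−γ) y(s) ds` has at most one continuous
solution on `[0,1]`. -/
theorem cordial_uniqueness (γ β h₀ : ℝ) (hγ0 : 0 < γ) (hγ1 : γ ≤ 1) (hβγ : γ ≤ β)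
    (hsmall : |h₀| * Beta γ (β - γ + 1) < 1)
    (g y₁ y₂ : ℝ → ℝ) (hg : ContinuousOn g (Set.Icc 0 1))
    (hy₁ : ContinuousOn y₁ (Set.Icc 0 1)) (hy₂ : ContinuousOn y₂ (Set.Icc 0 1))
    (heq₁ : ∀ t ∈ Set.Icc (0:ℝ) 1,
      y₁ t = g t + h₀ * ∫ s in (0:ℝ)..t, t ^ (-β) * (t - s) ^ (γ - 1) * s ^ (β - γ) * y₁ s)
    (heq₂ : ∀ t ∈ Set.Icc (0:ℝ) 1,
      y₂ t = g t + h₀ * ∫ s in (0:ℝ)..t, t ^ (-β) * (t - s) ^ (γ - 1) * s ^ (β - γ) * y₂ s) :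
    Set.EqOn y₁ y₂ (Set.Icc 0 1) := by
  set e : ℝ → ℝ := fun s => y₁ s - y₂ s with he
  have hecont : ContinuousOn e (Set.Icc 0 1) := hy₁.sub hy₂
  obtain ⟨t₀, ht₀mem, hmax⟩ := (isCompact_Icc).exists_isMaxOn
    (Set.nonempty_Icc.2 zero_le_one) hecont.abs
  set M := |e t₀| with hM
  have hMnonneg : 0 ≤ M := abs_nonneg _
  have hbound : ∀ x ∈ Set.Icc (0:ℝ) 1, |e x| ≤ M := fun x hx => hmax hx
  suffices hM0 : M ≤ 0 by
    intro x hx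
    have h1 : |e x| = 0 := le_antisymm ((hbound x hx).trans hM0) (abs_nonneg _)
    have h2 := abs_eq_zero.mp h1
    simpa [he, sub_eq_zero] using h2
  rcases eq_or_lt_of_le ht₀mem.1 with h0 | ht₀pos
  · -- t₀ = 0
    have h1 := heq₁ t₀ ht₀mem
    have h2 := heq₂ t₀ ht₀mem
    rw [← h0] at h1 h2
    simp only [intervalIntegral.integral_same, mul_zero, add_zero] at h1 h2
    rw [hM, ← h0, he]
    simp [h1, h2]
  · -- 0 < t₀
    have ht₀1 : t₀ ≤ 1 := ht₀mem.2
    have hsub : Set.Icc (0:ℝ) t₀ ⊆ Set.Icc (0:ℝ) 1 := Set.Icc_subset_Icc_right ht₀1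
    have huIcc : Set.uIcc (0:ℝ) t₀ = Set.Icc 0 t₀ := Set.uIcc_of_le ht₀pos.le
    set K : ℝ → ℝ := fun s => (t₀ - s) ^ (γ - 1) * s ^ (β - γ) with hKdef
    have hK : IntervalIntegrable K volume 0 t₀ := kernel_integrable γ β t₀ hγ0 hβγ
    have hKe : IntervalIntegrable (fun s => K s * e s) volume 0 t₀ :=
      hK.mul_continuousOn (by rw [huIcc]; exact hecont.mono hsub)
    have hKy₁ : IntervalIntegrable (fun s => K s * y₁ s) volume 0 t₀ :=
      hK.mul_continuousOn (by rw [huIcc]; exact hy₁.mono hsub)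
    have hKy₂ : IntervalIntegrable (fun s => K s * y₂ s) volume 0 t₀ :=
      hK.mul_continuousOn (by rw [huIcc]; exact hy₂.mono hsub)
    have hKnonneg : ∀ s ∈ Set.Icc (0:ℝ) t₀, 0 ≤ K s := fun s hs =>
      mul_nonneg (Real.rpow_nonneg (by linarith [hs.2]) _) (Real.rpow_nonneg hs.1 _)
    have hI₁ : (∫ s in (0:ℝ)..t₀, t₀ ^ (-β) * (t₀ - s) ^ (γ - 1) * s ^ (β - γ) * y₁ s)
        = t₀ ^ (-β) * ∫ s in (0:ℝ)..t₀, K s * y₁ s := by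
      rw [← intervalIntegral.integral_const_mul]
      exact intervalIntegral.integral_congr fun s _ => by simp [hKdef]; ring
    have hI₂ : (∫ s in (0:ℝ)..t₀, t₀ ^ (-β) * (t₀ - s) ^ (γ - 1) * s ^ (β - γ) * y₂ s)
        = t₀ ^ (-β) * ∫ s in (0:ℝ)..t₀, K s * y₂ s := by
      rw [← intervalIntegral.integral_const_mul]
      exact intervalIntegral.integral_congr fun s _ => by simp [hKdef]; ring
    have hetval : e t₀ = h₀ * (t₀ ^ (-β) * ∫ s in (0:ℝ)..t₀, K s * e s) := by
      have hsubint : (∫ s in (0:ℝ)..t₀, K s * e s)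
          = (∫ s in (0:ℝ)..t₀, K s * y₁ s) - ∫ s in (0:ℝ)..t₀, K s * y₂ s := by
        rw [← intervalIntegral.integral_sub hKy₁ hKy₂]
        exact intervalIntegral.integral_congr fun s _ => by simp [he]; ring
      rw [he]
      simp only
      rw [heq₁ t₀ ht₀mem, heq₂ t₀ ht₀mem, hI₁, hI₂, hsubint]
      ring
    have htβpos : (0:ℝ) < t₀ ^ (-β) := Real.rpow_pos_of_pos ht₀pos _
    have key : M ≤ |h₀| * Beta γ (β - γ + 1) * M := by
      have step1 : M = |h₀| * (t₀ ^ (-β) * |∫ s in (0:ℝ)..t₀, K s * e s|) := by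
        rw [hM, hetval, abs_mul, abs_mul, abs_of_pos htβpos]
      have step2 : |∫ s in (0:ℝ)..t₀, K s * e s| ≤ ∫ s in (0:ℝ)..t₀, |K s * e s| :=
        intervalIntegral.abs_integral_le_integral_abs ht₀pos.le
      have step3 : (∫ s in (0:ℝ)..t₀, |K s * e s|) ≤ ∫ s in (0:ℝ)..t₀, K s * M := by
        apply intervalIntegral.integral_mono_on ht₀pos.le hKe.abs (hK.mul_const M)
        intro s hs
        rw [abs_mul, abs_of_nonneg (hKnonneg s hs)]
        exact mul_le_mul_of_nonneg_left (hbound s (hsub hs)) (hKnonneg s hs)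
      have step4 : (∫ s in (0:ℝ)..t₀, K s * M)
          = t₀ ^ β * Beta γ (β - γ + 1) * M := by
        rw [intervalIntegral.integral_mul_const, kernel_integral γ β t₀ hγ0 hβγ ht₀pos]
      have hcancel : t₀ ^ (-β) * t₀ ^ β = 1 := by
        rw [← Real.rpow_add ht₀pos]; simp
      calc M = |h₀| * (t₀ ^ (-β) * |∫ s in (0:ℝ)..t₀, K s * e s|) := step1
        _ ≤ |h₀| * (t₀ ^ (-β) * (t₀ ^ β * Beta γ (β - γ + 1) * M)) := by
            apply mul_le_mul_of_nonneg_left _ (abs_nonneg _)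
            apply mul_le_mul_of_nonneg_left _ htβpos.le
            rw [← step4]
            exact step2.trans step3
        _ = |h₀| * Beta γ (β - γ + 1) * M := by
            rw [show t₀ ^ (-β) * (t₀ ^ β * Beta γ (β - γ + 1) * M)
              = (t₀ ^ (-β) * t₀ ^ β) * (Beta γ (β - γ + 1) * M) by ring, hcancel]
            ring
    nlinarith [key, hsmall, hMnonneg]
end
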